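/- arXiv:math/0412287 — 5 statements merged into one kernel-verified Lean document; each statement's English description precedes it below -/
import Mathlib

section
/- Let m be a positive integer with base-p expansion m = a_0 + a_1 p + ⋯ + a_n p^n. Then the multinomial coefficient m!/( (1!)^{a_0} (p!)^{a_1} ⋯ (p^n!)^{a_n} ) (the number of ways to partition an m-set into a_0 blocks of size 1, a_1 blocks of size p, …, a_n blocks of size p^n, with blocks of equal size unordered) counted as m!/(Π_i (p^i!)^{a_i}) is not divisible by p. -/
/-!
By Legendre, `(p - 1) · v_p(n!) = n - s_p(n)`, where `s_p` is the base-`p` digit sum; in particular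
`(p - 1) · v_p((p^i)!) = p^i - 1`. Hence `(p - 1)` times the valuation of the denominator is
`∑ aᵢ (p^i - 1) = m - ∑ aᵢ = m - s_p(m)`, which is `(p - 1) · v_p(m!)`: numerator and denominator
have the same `p`-adic valuation.
-/

open Finset
open scoped Nat

theorem List.sum_eq_sum_range_getD {M : Type*} [AddCommMonoid M] (L : List M) :
    L.sum = ∑ i ∈ Finset.range L.length, L.getD i 0 := by
  induction L with
  | nil => simp
  | cons a L ih => simp [Finset.sum_range_succ', ih, add_comm]

theorem Nat.ofDigits_eq_sum_range_getD {R : Type*} [Semiring R] (b : R) (L : List ℕ) :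
    Nat.ofDigits b L = ∑ i ∈ range L.length, (L.getD i 0 : R) * b ^ i := by
  induction L with
  | nil => simp [Nat.ofDigits]
  | cons a L ih =>
    rw [Nat.ofDigits, ih, mul_sum, List.length_cons, sum_range_succ', add_comm]
    congr 1
    · refine sum_congr rfl fun i _ => ?_
      rw [List.getD_cons_succ, _root_.pow_succ', (Nat.cast_commute _ b).symm.left_comm]
    · simp

theorem Nat.prod_factorial_pow_dvd_factorial_sum {ι : Type*} (s : Finset ι) (a n : ι → ℕ) :
    ∏ i ∈ s, (n i)! ^ a i ∣ (∑ i ∈ s, a i * n i)! := by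
  have h := Nat.prod_factorial_dvd_factorial_sum (s.sigma fun i => range (a i)) (fun x => n x.1)
  simpa [prod_sigma, sum_sigma] using h

theorem Nat.sum_digits_base_pow {b : ℕ} (hb : 1 < b) (k : ℕ) : (b.digits (b ^ k)).sum = 1 := by
  simpa [Nat.digits_of_lt b 1 one_ne_zero hb] using
    congrArg List.sum (Nat.digits_base_pow_mul hb one_pos (k := k))

section

variable (p : ℕ) [Fact p.Prime]

theorem padicValNat_finset_prod {ι : Type*} {s : Finset ι} {f : ι → ℕ} (hf : ∀ i ∈ s, f i ≠ 0) :
    padicValNat p (∏ i ∈ s, f i) = ∑ i ∈ s, padicValNat p (f i) := by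
  classical
  induction s using Finset.induction_on with
  | empty => simp
  | insert j s hj ih =>
    rw [prod_insert hj, sum_insert hj, padicValNat.mul (hf j (mem_insert_self j s))
      (prod_ne_zero_iff.2 fun i hi => hf i (mem_insert_of_mem hi)),
      ih fun i hi => hf i (mem_insert_of_mem hi)]

theorem sub_one_mul_padicValNat_factorial_pow (k : ℕ) :
    (p - 1) * padicValNat p (p ^ k)! = p ^ k - 1 := by
  rw [sub_one_mul_padicValNat_factorial, Nat.sum_digits_base_pow (Fact.out : p.Prime).one_lt]

variable {p}

theorem not_dvd_div_of_padicValNat_eq {n d : ℕ} (hd : d ∣ n) (hn : n ≠ 0)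
    (h : padicValNat p n = padicValNat p d) : ¬ p ∣ n / d := by
  have hval : padicValNat p (n / d) = 0 := by rw [padicValNat.div_of_dvd hd, h, Nat.sub_self]
  rcases padicValNat.eq_zero_iff.1 hval with hp | h0 | hndvd
  · exact absurd hp (Fact.out : p.Prime).ne_one
  · exact absurd h0 (Nat.div_ne_zero_iff_of_dvd hd |>.2 ⟨hn, ne_zero_of_dvd_ne_zero hn hd⟩)
  · exact hndvd

end

theorem multinomial_of_digits_not_dvd_general (p m : ℕ) (hp : p.Prime) :
    (∏ i ∈ Finset.range (Nat.digits p m).length,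
        (Nat.factorial (p ^ i)) ^ ((Nat.digits p m).getD i 0)) ∣ Nat.factorial m ∧
    ¬ p ∣ Nat.factorial m /
        ∏ i ∈ Finset.range (Nat.digits p m).length,
          (Nat.factorial (p ^ i)) ^ ((Nat.digits p m).getD i 0) := by
  have := Fact.mk hp
  set L := p.digits m
  have hexp : m = ∑ i ∈ range L.length, L.getD i 0 * p ^ i :=
    calc m = Nat.ofDigits p L := (Nat.ofDigits_digits p m).symm
      _ = _ := by simpa using Nat.ofDigits_eq_sum_range_getD p L
  have hdvd := hexp ▸ Nat.prod_factorial_pow_dvd_factorial_sum (range L.length) (L.getD · 0) (p ^ ·)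
  refine ⟨hdvd, not_dvd_div_of_padicValNat_eq hdvd m.factorial_ne_zero ?_⟩
  refine Nat.eq_of_mul_eq_mul_left (Nat.sub_pos_of_lt hp.one_lt) ?_
  rw [sub_one_mul_padicValNat_factorial,
    padicValNat_finset_prod p fun i _ => pow_ne_zero _ (Nat.factorial_ne_zero _), mul_sum]
  simp_rw [padicValNat.pow, mul_left_comm (p - 1),
    sub_one_mul_padicValNat_factorial_pow, Nat.mul_sub_one]
  rw [sum_tsub_distrib _ fun i _ => Nat.le_mul_of_pos_right _ (pow_pos hp.pos _),
    ← hexp, List.sum_eq_sum_range_getD]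

/-- Kummer-type theorem: if `m = a_0 + a_1 p + ⋯ + a_n pⁿ` is the base-`p`
expansion of `m` (`p` prime), then the multinomial coefficient
`m! / ((1!)^{a_0} (p!)^{a_1} ⋯ (pⁿ!)^{a_n})` is an integer not divisible by `p`. -/
theorem multinomial_of_digits_not_dvd (p m : ℕ) (hp : p.Prime) (hm : m ≠ 0) :
    (∏ i ∈ Finset.range (Nat.digits p m).length,
        (Nat.factorial (p ^ i)) ^ ((Nat.digits p m).getD i 0)) ∣ Nat.factorial m ∧
    ¬ p ∣ Nat.factorial m /
        ∏ i ∈ Finset.range (Nat.digits p m).length,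
          (Nat.factorial (p ^ i)) ^ ((Nat.digits p m).getD i 0) :=
  multinomial_of_digits_not_dvd_general p m hp
end

section
/- For R-modules M and M', the free divided power algebra of a direct sum decomposes as Γ(M ⊕ M') ≅ Γ(M) ⊗_R Γ(M') as graded R-algebras; in particular Γ^n(M ⊕ M') ≅ ⊕_{i+j=n} Γ^i(M) ⊗_R Γ^j(M'). -/
/-!
An algebra map out of `Γ(M)` is the same as a family `g n m` satisfying the defining relations
of divided powers. The Cauchy product `∑_{i+j=n} f i m * g j m` of two such families is again
one: additivity amounts to multiplicativity of the generating series `∑ₙ g n m Tⁿ`, and the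
product law is Vandermonde's identity. Applied to `γ_i(m) ⊗ 1` and `1 ⊗ γ_j(m')` this gives
`Γ(M × M') → Γ(M) ⊗ Γ(M')`, with inverse the product of the maps induced by the two inclusions:
both composites fix the generators `γ_n`. Both maps respect degrees because degree is additive
under multiplication, which identifies `Γⁿ(M × M')` with `⊕_{i+j=n} Γⁱ(M) ⊗ Γʲ(M')`.
-/

open TensorProduct

universe u

/-- The relations defining the free divided power algebra on `M`: the generator
`X (m, n)` stands for `γ_n(m)`. -/
inductive DPRel (R : Type u) [CommRing R] (M : Type u) [AddCommGroup M] [Module R M] :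
    MvPolynomial (M × ℕ) R → Prop
  | zero (m : M) : DPRel R M (MvPolynomial.X (m, 0) - 1)
  | smul (r : R) (m : M) (n : ℕ) :
      DPRel R M (MvPolynomial.X (r • m, n) - MvPolynomial.C (r ^ n) * MvPolynomial.X (m, n))
  | add (m m' : M) (n : ℕ) :
      DPRel R M (MvPolynomial.X (m + m', n) -
        ∑ ij ∈ Finset.HasAntidiagonal.antidiagonal n, MvPolynomial.X (m, ij.1) * MvPolynomial.X (m', ij.2))
  | mul (m : M) (i j : ℕ) :
      DPRel R M (MvPolynomial.X (m, i) * MvPolynomial.X (m, j) -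
        ((i + j).choose i : MvPolynomial (M × ℕ) R) * MvPolynomial.X (m, i + j))

/-- The free divided power algebra `Γ(M)` on the `R`-module `M`. -/
def DPA (R : Type u) [CommRing R] (M : Type u) [AddCommGroup M] [Module R M] : Type u :=
  MvPolynomial (M × ℕ) R ⧸ Ideal.span {p | DPRel R M p}

variable (R : Type u) [CommRing R] (M : Type u) [AddCommGroup M] [Module R M]

noncomputable instance : CommRing (DPA R M) := Ideal.Quotient.commRing _
noncomputable instance : Algebra R (DPA R M) := Ideal.Quotient.algebra R

/-- The divided power `γ_n(m) ∈ Γ(M)`. -/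
noncomputable def dpGamma (n : ℕ) (m : M) : DPA R M :=
  Ideal.Quotient.mk (Ideal.span {p | DPRel R M p}) (MvPolynomial.X (m, n))

/-- The degree `n` piece `Γⁿ(M)` of `Γ(M)`: the span of products `∏ γ_{n_i}(m_i)`
with `∑ n_i = n`. -/
noncomputable def GammaPow (n : ℕ) : Submodule R (DPA R M) :=
  Submodule.span R {x | ∃ (k : ℕ) (ms : Fin k → M) (ns : Fin k → ℕ),
    (∑ i, ns i) = n ∧ x = ∏ i, dpGamma R M (ns i) (ms i)}

lemma dpGamma_mem (n : ℕ) (m : M) : dpGamma R M n m ∈ GammaPow R M n :=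
  Submodule.subset_span ⟨1, fun _ => m, fun _ => n, by simp, by simp⟩

open Finset.HasAntidiagonal

theorem Finset.Nat.sum_antidiagonal_antidiagonal_choose_smul {T : Type*} [AddCommMonoid T]
    (w : ℕ → ℕ → T) (i j : ℕ) :
    ∑ ab ∈ antidiagonal i, ∑ cd ∈ antidiagonal j,
        ((ab.1 + cd.1).choose ab.1 * (ab.2 + cd.2).choose ab.2) • w (ab.1 + cd.1) (ab.2 + cd.2) =
      (i + j).choose i • ∑ ef ∈ antidiagonal (i + j), w ef.1 ef.2 := by
  -- Vandermonde splits `(i + j).choose i` along `e + f`; then `cd ↦ ab + cd` matches the terms,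
  -- and the unmatched ones vanish since `e < a` or `f < b`.
  have vandermonde : ∀ ef ∈ antidiagonal (i + j), (i + j).choose i • w ef.1 ef.2 =
      ∑ ab ∈ antidiagonal i, (ef.1.choose ab.1 * ef.2.choose ab.2) • w ef.1 ef.2 := by
    intro ef hef
    rw [← HasAntidiagonal.mem_antidiagonal.mp hef, Nat.add_choose_eq, Finset.sum_smul]
  rw [Finset.smul_sum, Finset.sum_congr rfl vandermonde]
  conv_rhs => rw [Finset.sum_comm]
  refine Finset.sum_congr rfl fun ab hab => ?_
  rw [HasAntidiagonal.mem_antidiagonal] at hab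
  refine Finset.sum_of_injOn (fun cd => ab + cd) (fun cd _ cd' _ h => add_left_cancel h) ?_ ?_ ?_
  · intro cd hcd
    simp only [Finset.mem_coe, HasAntidiagonal.mem_antidiagonal] at hcd ⊢
    rw [Prod.fst_add, Prod.snd_add]
    omega
  · rintro ⟨e, f⟩ hef hnot
    rw [HasAntidiagonal.mem_antidiagonal] at hef
    have : e < ab.1 ∨ f < ab.2 := by
      by_contra! h
      refine hnot ⟨(e - ab.1, f - ab.2), ?_, by ext <;> simp <;> omega⟩
      simp only [Finset.mem_coe, HasAntidiagonal.mem_antidiagonal]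
      omega
    rcases this with h | h <;> simp [Nat.choose_eq_zero_of_lt h]
  · exact fun _ _ => rfl

theorem Algebra.TensorProduct.includeLeft_mul_includeRight {S A B : Type*} [CommSemiring S]
    [Semiring A] [Semiring B] [Algebra S A] [Algebra S B] (a : A) (b : B) :
    (includeLeft : A →ₐ[S] A ⊗[S] B) a * includeRight b = a ⊗ₜ[S] b := by
  simp

section TensorGrading

variable {S A B : Type*} [CommSemiring S] [Semiring A] [Semiring B] [Algebra S A] [Algebra S B]
  (P : ℕ → Submodule S A) (Q : ℕ → Submodule S B)

/-- The image of `⊕_{i+j=n} P i ⊗ Q j` in `A ⊗ B`. -/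
noncomputable def tensorGrading (n : ℕ) : Submodule S (A ⊗[S] B) :=
  ⨆ i ∈ Finset.range (n + 1), LinearMap.range (TensorProduct.map (P i).subtype (Q (n - i)).subtype)

variable {P Q}

theorem tmul_mem_tensorGrading {i j : ℕ} {a : A} {b : B} (ha : a ∈ P i) (hb : b ∈ Q j) :
    a ⊗ₜ[S] b ∈ tensorGrading P Q (i + j) := by
  rw [← Nat.add_sub_cancel_left (n := i) (m := j)] at hb
  exact Submodule.mem_iSup_of_mem i <| Submodule.mem_iSup_of_mem (by simp) ⟨⟨a, ha⟩ ⊗ₜ ⟨b, hb⟩, rfl⟩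

instance [SetLike.GradedMonoid P] [SetLike.GradedMonoid Q] :
    SetLike.GradedMonoid (tensorGrading P Q) where
  one_mem := by
    have h := tmul_mem_tensorGrading (SetLike.one_mem_graded P) (SetLike.one_mem_graded Q)
    rwa [← Algebra.TensorProduct.one_def] at h
  mul_mem a b x y hx hy := by
    have hle : tensorGrading P Q a * tensorGrading P Q b ≤ tensorGrading P Q (a + b) := by
      conv_lhs => simp only [tensorGrading, Submodule.iSup_mul, Submodule.mul_iSup]
      simp only [iSup_le_iff, Finset.mem_range]
      intro i hi j hj
      rw [TensorProduct.range_map_eq_span_tmul, TensorProduct.range_map_eq_span_tmul,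
        Submodule.span_mul_span, Submodule.span_le]
      rintro _ ⟨_, ⟨c, d, rfl⟩, _, ⟨c', d', rfl⟩, rfl⟩
      simp only [SetLike.mem_coe, Submodule.subtype_apply, Algebra.TensorProduct.tmul_mul_tmul]
      convert tmul_mem_tensorGrading (SetLike.mul_mem_graded c.2 c'.2)
        (SetLike.mul_mem_graded d.2 d'.2) using 2
      omega
    exact hle (Submodule.mul_mem_mul hx hy)

end TensorGrading

section DPFamily

variable {R M}
variable {S : Type*} [CommRing S] [Algebra R S]

variable (R) in
/-- The relations `DPRel`: by `DPA.lift`, these are the families `n m ↦ φ (γ_n(m))` for algebra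
maps `φ` out of `Γ(M)`. -/
structure IsDPFamily (g : ℕ → M → S) : Prop where
  zero : ∀ m, g 0 m = 1
  smul : ∀ (r : R) (m : M) (n : ℕ), g n (r • m) = r ^ n • g n m
  add : ∀ (m m' : M) (n : ℕ), g n (m + m') = ∑ ij ∈ antidiagonal n, g ij.1 m * g ij.2 m'
  mul : ∀ (m : M) (i j : ℕ), g i m * g j m = ((i + j).choose i : S) * g (i + j) m

namespace IsDPFamily

variable {g : ℕ → M → S}

theorem apply_zero (hg : IsDPFamily R g) {n : ℕ} (hn : n ≠ 0) : g n 0 = 0 := by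
  simpa [zero_pow hn] using hg.smul 0 0 n

theorem comp_linearMap {N : Type u} [AddCommGroup N] [Module R N] (hg : IsDPFamily R g)
    (f : N →ₗ[R] M) : IsDPFamily R fun n (x : N) => g n (f x) where
  zero x := hg.zero (f x)
  smul r x n := by rw [map_smul, hg.smul]
  add x y n := by rw [map_add, hg.add]
  mul x i j := hg.mul (f x) i j

theorem map_algHom {S' : Type*} [CommRing S'] [Algebra R S'] (hg : IsDPFamily R g)
    (φ : S →ₐ[R] S') : IsDPFamily R fun n m => φ (g n m) where
  zero m := by rw [hg.zero, map_one]
  smul r m n := by rw [hg.smul, map_smul]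
  add m m' n := by simp only [hg.add, map_sum, map_mul]
  mul m i j := by rw [← map_mul, hg.mul, map_mul, map_natCast]

theorem powerSeries_mk_add (hg : IsDPFamily R g) (m m' : M) :
    PowerSeries.mk (fun n => g n (m + m')) =
      PowerSeries.mk (fun n => g n m) * PowerSeries.mk (fun n => g n m') := by
  ext n
  simp only [PowerSeries.coeff_mk, PowerSeries.coeff_mul, hg.add]

theorem conv {f : ℕ → M → S} (hf : IsDPFamily R f) (hg : IsDPFamily R g) :
    IsDPFamily R fun n m => ∑ ij ∈ antidiagonal n, f ij.1 m * g ij.2 m where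
  zero m := by simp [hf.zero, hg.zero]
  smul r m n := by
    rw [Finset.smul_sum]
    refine Finset.sum_congr rfl fun ij hij => ?_
    rw [hf.smul, hg.smul, smul_mul_smul_comm, ← pow_add, mem_antidiagonal.mp hij]
  add m m' n := by
    -- the add law says that `m ↦ ∑ₙ g n m Tⁿ` turns sums into products
    have h : PowerSeries.mk (fun n => f n (m + m')) * PowerSeries.mk (fun n => g n (m + m')) =
        (PowerSeries.mk (fun n => f n m) * PowerSeries.mk (fun n => g n m)) *
          (PowerSeries.mk (fun n => f n m') * PowerSeries.mk (fun n => g n m')) := by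
      rw [hf.powerSeries_mk_add, hg.powerSeries_mk_add]
      ring
    simpa only [PowerSeries.coeff_mul, PowerSeries.coeff_mk] using congrArg (PowerSeries.coeff n) h
  mul m i j := by
    rw [Finset.sum_mul_sum, ← nsmul_eq_mul,
      ← Finset.Nat.sum_antidiagonal_antidiagonal_choose_smul fun e e' => f e m * g e' m]
    refine Finset.sum_congr rfl fun ab _ => Finset.sum_congr rfl fun cd _ => ?_
    rw [mul_mul_mul_comm, hf.mul, hg.mul, nsmul_eq_mul, Nat.cast_mul]
    ring

end IsDPFamily

end DPFamily

namespace DPA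

noncomputable def mk : MvPolynomial (M × ℕ) R →ₐ[R] DPA R M := Ideal.Quotient.mkₐ R _

theorem dpGamma_eq_mk (n : ℕ) (m : M) : dpGamma R M n m = mk R M (MvPolynomial.X (m, n)) := rfl

theorem mk_eq_mk_of_rel {p q : MvPolynomial (M × ℕ) R} (h : DPRel R M (p - q)) :
    mk R M p = mk R M q := by
  rw [← sub_eq_zero, ← map_sub]
  exact Ideal.Quotient.eq_zero_iff_mem.mpr (Ideal.subset_span h)

theorem isDPFamily_dpGamma : IsDPFamily R (dpGamma R M) where
  zero m := by rw [dpGamma_eq_mk, mk_eq_mk_of_rel R M (.zero m), map_one]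
  smul r m n := by
    rw [dpGamma_eq_mk, mk_eq_mk_of_rel R M (.smul r m n), ← MvPolynomial.algebraMap_eq, map_mul,
      AlgHom.commutes, ← Algebra.smul_def, dpGamma_eq_mk]
  add m m' n := by
    simp only [dpGamma_eq_mk, mk_eq_mk_of_rel R M (.add m m' n), map_sum, map_mul]
  mul m i j := by
    rw [dpGamma_eq_mk, dpGamma_eq_mk, ← map_mul, mk_eq_mk_of_rel R M (.mul m i j), map_mul,
      map_natCast, dpGamma_eq_mk]

variable {R M}
variable {S : Type*} [CommRing S] [Algebra R S]

noncomputable def lift {g : ℕ → M → S} (hg : IsDPFamily R g) : DPA R M →ₐ[R] S :=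
  Ideal.Quotient.liftₐ _ (MvPolynomial.aeval fun p => g p.2 p.1) fun a ha => by
    suffices Ideal.span {p | DPRel R M p} ≤
        RingHom.ker (MvPolynomial.aeval (R := R) fun p : M × ℕ => g p.2 p.1) from this ha
    refine Ideal.span_le.mpr fun p hp => ?_
    induction hp with
    | zero m => simp [hg.zero]
    | smul r m n => simp [hg.smul, Algebra.smul_def]
    | add m m' n => simp [hg.add]
    | mul m i j => simp [hg.mul]

@[simp]
theorem lift_dpGamma {g : ℕ → M → S} (hg : IsDPFamily R g) (n : ℕ) (m : M) :
    lift hg (dpGamma R M n m) = g n m :=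
  MvPolynomial.aeval_X _ _

@[ext]
theorem algHom_ext {φ ψ : DPA R M →ₐ[R] S}
    (h : ∀ (n : ℕ) (m : M), φ (dpGamma R M n m) = ψ (dpGamma R M n m)) : φ = ψ :=
  Ideal.Quotient.algHom_ext _ (MvPolynomial.algHom_ext fun p => h p.2 p.1)

variable {N : Type u} [AddCommGroup N] [Module R N]

noncomputable def map (f : M →ₗ[R] N) : DPA R M →ₐ[R] DPA R N :=
  lift ((isDPFamily_dpGamma R N).comp_linearMap f)

@[simp]
theorem map_dpGamma (f : M →ₗ[R] N) (n : ℕ) (m : M) :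
    map f (dpGamma R M n m) = dpGamma R N n (f m) :=
  lift_dpGamma _ n m

instance : SetLike.GradedMonoid (GammaPow R M) where
  one_mem := Submodule.subset_span ⟨0, Fin.elim0, Fin.elim0, by simp, by simp⟩
  mul_mem a b x y hx hy := by
    have hle : GammaPow R M a * GammaPow R M b ≤ GammaPow R M (a + b) := by
      rw [GammaPow, GammaPow, Submodule.span_mul_span, Submodule.span_le]
      rintro _ ⟨_, ⟨k, ms, ns, rfl, rfl⟩, _, ⟨l, ms', ns', rfl, rfl⟩, rfl⟩
      refine Submodule.subset_span ⟨k + l, Fin.append ms ms', Fin.append ns ns', ?_, ?_⟩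
      · simp [Fin.sum_univ_add]
      · simp [Fin.prod_univ_add]
    exact hle (Submodule.mul_mem_mul hx hy)

theorem map_gammaPow_le (P : ℕ → Submodule R S) [SetLike.GradedMonoid P] (φ : DPA R M →ₐ[R] S)
    (hφ : ∀ n m, φ (dpGamma R M n m) ∈ P n) (n : ℕ) :
    (GammaPow R M n).map φ.toLinearMap ≤ P n := by
  rw [GammaPow, Submodule.map_span, Submodule.span_le]
  rintro _ ⟨_, ⟨k, ms, ns, rfl, rfl⟩, rfl⟩
  simpa only [AlgHom.toLinearMap_apply, map_prod, SetLike.mem_coe] using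
    SetLike.prod_mem_graded P ns _ fun i _ => hφ (ns i) (ms i)

theorem map_mem_gammaPow (f : M →ₗ[R] N) {i : ℕ} {a : DPA R M} (ha : a ∈ GammaPow R M i) :
    map f a ∈ GammaPow R N i :=
  map_gammaPow_le (GammaPow R N) (map f)
    (fun n m => (map_dpGamma f n m).symm ▸ dpGamma_mem R N n (f m)) i ⟨a, ha, rfl⟩

variable {M' : Type u} [AddCommGroup M'] [Module R M']

theorem isDPFamily_tmul :
    IsDPFamily R fun n (p : M × M') =>
      ∑ ij ∈ antidiagonal n, dpGamma R M ij.1 p.1 ⊗ₜ[R] dpGamma R M' ij.2 p.2 := by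
  have hl := ((isDPFamily_dpGamma R M).comp_linearMap (LinearMap.fst R M M')).map_algHom
    (Algebra.TensorProduct.includeLeft : DPA R M →ₐ[R] DPA R M ⊗[R] DPA R M')
  have hr := ((isDPFamily_dpGamma R M').comp_linearMap (LinearMap.snd R M M')).map_algHom
    (Algebra.TensorProduct.includeRight : DPA R M' →ₐ[R] DPA R M ⊗[R] DPA R M')
  simpa only [LinearMap.fst_apply, LinearMap.snd_apply,
    Algebra.TensorProduct.includeLeft_mul_includeRight] using hl.conv hr

noncomputable def prodToTensor : DPA R (M × M') →ₐ[R] DPA R M ⊗[R] DPA R M' :=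
  lift isDPFamily_tmul

theorem prodToTensor_dpGamma (n : ℕ) (p : M × M') :
    prodToTensor (dpGamma R (M × M') n p) =
      ∑ ij ∈ antidiagonal n, dpGamma R M ij.1 p.1 ⊗ₜ[R] dpGamma R M' ij.2 p.2 :=
  lift_dpGamma _ n p

noncomputable def tensorToProd : DPA R M ⊗[R] DPA R M' →ₐ[R] DPA R (M × M') :=
  Algebra.TensorProduct.productMap (map (LinearMap.inl R M M')) (map (LinearMap.inr R M M'))

theorem tensorToProd_tmul (a : DPA R M) (b : DPA R M') :
    tensorToProd (a ⊗ₜ[R] b) = map (LinearMap.inl R M M') a * map (LinearMap.inr R M M') b :=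
  Algebra.TensorProduct.productMap_apply_tmul _ _ _ _

theorem prodToTensor_dpGamma_inl (n : ℕ) (m : M) :
    prodToTensor (dpGamma R (M × M') n (m, 0)) = dpGamma R M n m ⊗ₜ[R] 1 := by
  rw [prodToTensor_dpGamma, Finset.sum_eq_single (n, 0)]
  · rw [(isDPFamily_dpGamma R M').zero]
  · rintro ⟨i, j⟩ hij hne
    have hj : j ≠ 0 := by rintro rfl; simp_all
    rw [(isDPFamily_dpGamma R M').apply_zero hj, TensorProduct.tmul_zero]
  · simp

theorem prodToTensor_dpGamma_inr (n : ℕ) (m' : M') :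
    prodToTensor (dpGamma R (M × M') n (0, m')) = 1 ⊗ₜ[R] dpGamma R M' n m' := by
  rw [prodToTensor_dpGamma, Finset.sum_eq_single (0, n)]
  · rw [(isDPFamily_dpGamma R M).zero]
  · rintro ⟨i, j⟩ hij hne
    have hi : i ≠ 0 := by rintro rfl; simp_all
    rw [(isDPFamily_dpGamma R M).apply_zero hi, TensorProduct.zero_tmul]
  · simp

theorem prodToTensor_comp_tensorToProd :
    (prodToTensor (R := R) (M := M) (M' := M')).comp tensorToProd = AlgHom.id R _ := by
  refine Algebra.TensorProduct.ext (algHom_ext fun n m => ?_) (algHom_ext fun n m' => ?_)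
  · simp [tensorToProd_tmul, prodToTensor_dpGamma_inl]
  · simp [tensorToProd_tmul, prodToTensor_dpGamma_inr]

theorem tensorToProd_comp_prodToTensor :
    (tensorToProd (R := R) (M := M) (M' := M')).comp prodToTensor = AlgHom.id R _ := by
  refine algHom_ext fun n p => ?_
  simp [prodToTensor_dpGamma, tensorToProd_tmul, ← (isDPFamily_dpGamma R (M × M')).add]

noncomputable def prodEquivTensor : DPA R (M × M') ≃ₐ[R] DPA R M ⊗[R] DPA R M' :=
  AlgEquiv.ofAlgHom prodToTensor tensorToProd prodToTensor_comp_tensorToProd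
    tensorToProd_comp_prodToTensor

theorem map_prodEquivTensor_gammaPow (n : ℕ) :
    (GammaPow R (M × M') n).map (prodEquivTensor (R := R)).toLinearMap =
      tensorGrading (GammaPow R M) (GammaPow R M') n := by
  refine le_antisymm (map_gammaPow_le _ prodToTensor (fun k p => ?_) n) (iSup₂_le fun i hi => ?_)
  · rw [prodToTensor_dpGamma]
    refine Submodule.sum_mem _ fun ij hij => ?_
    rw [← mem_antidiagonal.mp hij]
    exact tmul_mem_tensorGrading (dpGamma_mem R M _ _) (dpGamma_mem R M' _ _)
  · rw [TensorProduct.range_map_eq_span_tmul, Submodule.span_le]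
    rintro _ ⟨a, b, rfl⟩
    refine ⟨tensorToProd (a.1 ⊗ₜ[R] b.1), ?_, AlgHom.congr_fun prodToTensor_comp_tensorToProd _⟩
    have hmem := SetLike.mul_mem_graded (map_mem_gammaPow (LinearMap.inl R M M') a.2)
      (map_mem_gammaPow (LinearMap.inr R M M') b.2)
    rwa [Nat.add_sub_cancel' (Nat.lt_succ_iff.mp (Finset.mem_range.mp hi)), ← tensorToProd_tmul]
      at hmem

end DPA

/-- `Γ(M ⊕ M') ≅ Γ(M) ⊗ Γ(M')` as (graded) `R`-algebras: there is an `R`-algebra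
isomorphism sending `γ_n(m, m')` to `∑_{i+j=n} γ_i(m) ⊗ γ_j(m')`, and carrying
`Γⁿ(M ⊕ M')` onto `⊕_{i+j=n} Γⁱ(M) ⊗ Γʲ(M')`. -/
theorem dpa_prod_iso_tensor (M' : Type u) [AddCommGroup M'] [Module R M'] :
    ∃ e : DPA R (M × M') ≃ₐ[R] (DPA R M ⊗[R] DPA R M'),
      (∀ (n : ℕ) (m : M) (m' : M'),
        e (dpGamma R (M × M') n (m, m')) =
          ∑ i ∈ Finset.range (n + 1), dpGamma R M i m ⊗ₜ[R] dpGamma R M' (n - i) m') ∧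
      ∀ n : ℕ,
        Submodule.map (e.toLinearMap) (GammaPow R (M × M') n) =
          ⨆ i ∈ Finset.range (n + 1),
            LinearMap.range
              (TensorProduct.map (GammaPow R M i).subtype (GammaPow R M' (n - i)).subtype) :=
  ⟨DPA.prodEquivTensor, fun n m m' =>
    (DPA.prodToTensor_dpGamma n (m, m')).trans <| Finset.Nat.sum_antidiagonal_eq_sum_range_succ
      (fun i j => dpGamma R M i m ⊗ₜ[R] dpGamma R M' j m') n,
    DPA.map_prodEquivTensor_gammaPow⟩
end

section
/- Every strict polynomial functor F decomposes uniquely as a direct sum F = ⊕_i F_i where each F_i is homogeneous of degree i; concretely, for each finitely generated projective P, the operators u_i ∈ End_R(F(P)) defined by F(λ·id) = Σ_i λ^i u_i (λ a formal variable) form a complete system of orthogonal idempotents. -/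
open TensorProduct Polynomial

universe u

/-- A strict polynomial functor over `R`: a function `obj` from finitely
generated projective `R`-modules to `R`-modules, together with, for every
commutative `R`-algebra `S`, structure maps
`Hom_S(S ⊗ P, S ⊗ Q) → Hom_S(S ⊗ F(P), S ⊗ F(Q))` preserving identities and
composition and commuting with extension of scalars. -/
structure SPF (R : Type u) [CommRing R] : Type (u + 1) where
  obj : ∀ (P : ModuleCat.{u} R), Module.Finite R ↥P → Module.Projective R ↥P → ModuleCat.{u} R
  map : ∀ (P Q : ModuleCat.{u} R) (hP₁ : Module.Finite R ↥P) (hP₂ : Module.Projective R ↥P)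
    (hQ₁ : Module.Finite R ↥Q) (hQ₂ : Module.Projective R ↥Q)
    (S : Type u) [CommRing S] [Algebra R S],
    (S ⊗[R] ↥P →ₗ[S] S ⊗[R] ↥Q) →
      (S ⊗[R] ↥(obj P hP₁ hP₂) →ₗ[S] S ⊗[R] ↥(obj Q hQ₁ hQ₂))
  map_id : ∀ (P : ModuleCat.{u} R) (hP₁ : Module.Finite R ↥P) (hP₂ : Module.Projective R ↥P)
    (S : Type u) [CommRing S] [Algebra R S],
    map P P hP₁ hP₂ hP₁ hP₂ S LinearMap.id = LinearMap.id
  map_comp : ∀ (P₁ P₂ P₃ : ModuleCat.{u} R)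
    (h₁ : Module.Finite R ↥P₁) (h₁' : Module.Projective R ↥P₁)
    (h₂ : Module.Finite R ↥P₂) (h₂' : Module.Projective R ↥P₂)
    (h₃ : Module.Finite R ↥P₃) (h₃' : Module.Projective R ↥P₃)
    (S : Type u) [CommRing S] [Algebra R S]
    (f : S ⊗[R] ↥P₂ →ₗ[S] S ⊗[R] ↥P₃) (g : S ⊗[R] ↥P₁ →ₗ[S] S ⊗[R] ↥P₂),
    map P₁ P₃ h₁ h₁' h₃ h₃' S (f ∘ₗ g) =
      (map P₂ P₃ h₂ h₂' h₃ h₃' S f) ∘ₗ (map P₁ P₂ h₁ h₁' h₂ h₂' S g)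
  map_baseChange : ∀ (P Q : ModuleCat.{u} R)
    (hP₁ : Module.Finite R ↥P) (hP₂ : Module.Projective R ↥P)
    (hQ₁ : Module.Finite R ↥Q) (hQ₂ : Module.Projective R ↥Q)
    (S S' : Type u) [CommRing S] [Algebra R S] [CommRing S'] [Algebra R S']
    (φ : S →ₐ[R] S')
    (f : S ⊗[R] ↥P →ₗ[S] S ⊗[R] ↥Q) (f' : S' ⊗[R] ↥P →ₗ[S'] S' ⊗[R] ↥Q),
    (∀ x, f' (LinearMap.rTensor (↥P) φ.toLinearMap x) =
        LinearMap.rTensor (↥Q) φ.toLinearMap (f x)) →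
    ∀ y, (map P Q hP₁ hP₂ hQ₁ hQ₂ S' f')
          (LinearMap.rTensor (↥(obj P hP₁ hP₂)) φ.toLinearMap y) =
        LinearMap.rTensor (↥(obj Q hQ₁ hQ₂)) φ.toLinearMap
          ((map P Q hP₁ hP₂ hQ₁ hQ₂ S f) y)

section aux
variable {R : Type u} [CommRing R] {M : Type u} [AddCommGroup M] [Module R M]

noncomputable def coeffT (i : ℕ) : Polynomial R ⊗[R] M →ₗ[R] M :=
  (TensorProduct.lid R M).toLinearMap ∘ₗ LinearMap.rTensor M (Polynomial.lcoeff R i)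

lemma coeffT_tmul (i : ℕ) (p : Polynomial R) (m : M) :
    coeffT i (p ⊗ₜ m) = p.coeff i • m := by
  simp [coeffT]

lemma sum_pad {α : Type*} [AddCommMonoid α] (f : ℕ → α) {N N' : ℕ} (h : N ≤ N')
    (hf : ∀ i, N ≤ i → f i = 0) :
    ∑ i ∈ Finset.range N, f i = ∑ i ∈ Finset.range N', f i :=
  Finset.sum_subset (Finset.range_subset_range.2 h)
    (fun i _ hi => hf i (Nat.le_of_not_lt (by simpa using hi)))

lemma exists_bound (z : Polynomial R ⊗[R] M) :
    ∃ N : ℕ, (∀ i, N ≤ i → coeffT i z = 0) ∧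
      z = ∑ i ∈ Finset.range N, ((Polynomial.X : Polynomial R) ^ i) ⊗ₜ[R] (coeffT i z) := by
  induction z using TensorProduct.induction_on with
  | zero => exact ⟨0, fun i _ => map_zero _, by simp⟩
  | tmul p m =>
    refine ⟨p.natDegree + 1, fun i hi => ?_, ?_⟩
    · rw [coeffT_tmul, p.coeff_eq_zero_of_natDegree_lt (by omega), zero_smul]
    · conv_lhs => rw [p.as_sum_range' (p.natDegree + 1) (Nat.lt_succ_self _)]
      rw [TensorProduct.sum_tmul]
      refine Finset.sum_congr rfl fun i _ => ?_
      rw [coeffT_tmul, ← smul_tmul, Polynomial.smul_eq_C_mul,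
        Polynomial.C_mul_X_pow_eq_monomial]
  | add z₁ z₂ ih₁ ih₂ =>
    obtain ⟨N₁, h₁, e₁⟩ := ih₁
    obtain ⟨N₂, h₂, e₂⟩ := ih₂
    refine ⟨max N₁ N₂, fun i hi => ?_, ?_⟩
    · rw [map_add, h₁ i (le_trans (le_max_left _ _) hi),
        h₂ i (le_trans (le_max_right _ _) hi), add_zero]
    · have e₁' : z₁ = ∑ i ∈ Finset.range (max N₁ N₂),
          ((X : Polynomial R)^i) ⊗ₜ[R] (coeffT i z₁) := by
        conv_lhs => rw [e₁]
        exact sum_pad _ (le_max_left _ _) fun i hi => by rw [h₁ i hi, tmul_zero]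
      have e₂' : z₂ = ∑ i ∈ Finset.range (max N₁ N₂),
          ((X : Polynomial R)^i) ⊗ₜ[R] (coeffT i z₂) := by
        conv_lhs => rw [e₂]
        exact sum_pad _ (le_max_right _ _) fun i hi => by rw [h₂ i hi, tmul_zero]
      conv_lhs => rw [e₁', e₂']
      rw [← Finset.sum_add_distrib]
      exact Finset.sum_congr rfl fun i _ => by rw [map_add, tmul_add]

variable (A : Type u) [CommRing A] [Algebra R A]

noncomputable def coeffS (j : ℕ) : Polynomial A ⊗[R] M →ₗ[R] A ⊗[R] M :=
  LinearMap.rTensor M (((Polynomial.lcoeff A j).restrictScalars R : Polynomial A →ₗ[R] A))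

lemma coeffS_tmul (j : ℕ) (p : Polynomial A) (m : M) :
    coeffS A j (p ⊗ₜ[R] m) = (p.coeff j) ⊗ₜ[R] m := by
  simp [coeffS]

lemma coeffS_CmulXpow (i k : ℕ) (c : A) (m : M) :
    coeffS A i ((Polynomial.C c * (Polynomial.X : Polynomial A) ^ k) ⊗ₜ[R] m) =
      if i = k then c ⊗ₜ[R] m else 0 := by
  rw [coeffS_tmul, Polynomial.coeff_C_mul, Polynomial.coeff_X_pow]
  split <;> simp

lemma coeffT_Xpow (i k : ℕ) (m : M) :
    coeffT i (((Polynomial.X : Polynomial R) ^ k) ⊗ₜ[R] m) = if i = k then m else 0 := by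
  rw [coeffT_tmul, Polynomial.coeff_X_pow]
  split <;> simp

lemma coeffS_smul_rTensor (i j : ℕ) (w : A ⊗[R] M) :
    coeffS A i (((Polynomial.X : Polynomial A) ^ j) •
      LinearMap.rTensor M (IsScalarTower.toAlgHom R A (Polynomial A)).toLinearMap w) =
      if i = j then w else 0 := by
  induction w using TensorProduct.induction_on with
  | zero => simp
  | tmul a m =>
    rw [LinearMap.rTensor_tmul, AlgHom.toLinearMap_apply, IsScalarTower.coe_toAlgHom',
      Polynomial.algebraMap_eq, smul_tmul', smul_eq_mul, mul_comm, coeffS_CmulXpow]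
  | add w₁ w₂ ih₁ ih₂ =>
    rw [map_add, smul_add, map_add, ih₁, ih₂]
    split <;> simp


lemma chi_term (i j k q : ℕ) (m : M) :
    coeffT i (coeffS (Polynomial R) j
      ((Polynomial.C ((Polynomial.X : Polynomial R) ^ k) *
        (Polynomial.X : Polynomial (Polynomial R)) ^ q) ⊗ₜ[R] m)) =
      if j = q then (if i = k then m else 0) else 0 := by
  rw [coeffS_CmulXpow]
  by_cases h : j = q
  · rw [if_pos h, if_pos h, coeffT_Xpow]
  · rw [if_neg h, if_neg h, map_zero]

end aux

section spf
variable {R : Type u} [CommRing R]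

/-- compatibility of scalar endomorphisms with base change -/
lemma smul_id_compat {N : Type u} [AddCommGroup N] [Module R N]
    (S S' : Type u) [CommRing S] [Algebra R S] [CommRing S'] [Algebra R S']
    (φ : S →ₐ[R] S') (s : S) (z : S ⊗[R] N) :
    ((φ s • LinearMap.id : S' ⊗[R] N →ₗ[S'] S' ⊗[R] N))
        (LinearMap.rTensor N φ.toLinearMap z) =
      LinearMap.rTensor N φ.toLinearMap ((s • LinearMap.id : S ⊗[R] N →ₗ[S] S ⊗[R] N) z) := by
  induction z using TensorProduct.induction_on with
  | zero => simp
  | tmul a n =>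
    simp only [LinearMap.rTensor_tmul, LinearMap.smul_apply, LinearMap.id_apply,
      AlgHom.toLinearMap_apply, smul_tmul', smul_eq_mul, ← map_mul]
  | add z₁ z₂ ih₁ ih₂ => simp only [map_add, ih₁, ih₂]

lemma smul_id_comp {N : Type u} [AddCommGroup N] [Module R N]
    (S : Type u) [CommRing S] [Algebra R S] (a b : S) :
    ((a * b) • LinearMap.id : S ⊗[R] N →ₗ[S] S ⊗[R] N) =
      (a • LinearMap.id : S ⊗[R] N →ₗ[S] S ⊗[R] N) ∘ₗ (b • LinearMap.id) := by
  rw [LinearMap.smul_comp, LinearMap.comp_smul, LinearMap.id_comp, smul_smul]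

variable (F : SPF R) (P : ModuleCat.{u} R)
    (hP₁ : Module.Finite R ↥P) (hP₂ : Module.Projective R ↥P)
    (u : ℕ → Module.End R ↥(F.obj P hP₁ hP₂))
    (hu : ∀ (i : ℕ) (x : ↥(F.obj P hP₁ hP₂)),
      u i x = (TensorProduct.lid R ↥(F.obj P hP₁ hP₂))
        (LinearMap.rTensor (↥(F.obj P hP₁ hP₂)) (Polynomial.lcoeff R i)
          ((F.map P P hP₁ hP₂ hP₁ hP₂ (Polynomial R)
              ((Polynomial.X : Polynomial R) • LinearMap.id))
            ((1 : Polynomial R) ⊗ₜ[R] x))))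

include hu in
lemma u_eq_coeffT (i : ℕ) (x : ↥(F.obj P hP₁ hP₂)) :
    u i x = coeffT i ((F.map P P hP₁ hP₂ hP₁ hP₂ (Polynomial R)
        ((Polynomial.X : Polynomial R) • LinearMap.id)) ((1 : Polynomial R) ⊗ₜ[R] x)) := by
  rw [hu]; rfl

include hu in
lemma u_bound (x : ↥(F.obj P hP₁ hP₂)) : ∃ N, ∀ i, N ≤ i → u i x = 0 := by
  obtain ⟨N, hN, -⟩ := exists_bound ((F.map P P hP₁ hP₂ hP₁ hP₂ (Polynomial R)
      ((Polynomial.X : Polynomial R) • LinearMap.id)) ((1 : Polynomial R) ⊗ₜ[R] x))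
  exact ⟨N, fun i hi => by rw [u_eq_coeffT F P hP₁ hP₂ u hu, hN i hi]⟩

include hu in
lemma u_expand (x : ↥(F.obj P hP₁ hP₂)) {N : ℕ} (hN : ∀ i, N ≤ i → u i x = 0)
    (S : Type u) [CommRing S] [Algebra R S] (s : S) :
    (F.map P P hP₁ hP₂ hP₁ hP₂ S (s • LinearMap.id)) ((1 : S) ⊗ₜ[R] x) =
      ∑ i ∈ Finset.range N, (s ^ i) ⊗ₜ[R] (u i x) := by
  set z := (F.map P P hP₁ hP₂ hP₁ hP₂ (Polynomial R)
      ((Polynomial.X : Polynomial R) • LinearMap.id)) ((1 : Polynomial R) ⊗ₜ[R] x) with hzdef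
  obtain ⟨N₀, hN₀, hz⟩ := exists_bound z
  have hu0 : ∀ i, N₀ ≤ i → u i x = 0 := fun i hi => by
    rw [u_eq_coeffT F P hP₁ hP₂ u hu, ← hzdef, hN₀ i hi]
  have hzu : z = ∑ i ∈ Finset.range N₀, ((Polynomial.X : Polynomial R) ^ i) ⊗ₜ[R] (u i x) := by
    rw [hz]
    exact Finset.sum_congr rfl fun i _ => by
      rw [u_eq_coeffT F P hP₁ hP₂ u hu, ← hzdef]
  set φ := (Polynomial.aeval s : Polynomial R →ₐ[R] S) with hφ
  have compat : ∀ w : Polynomial R ⊗[R] ↥P,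
      ((s • LinearMap.id : S ⊗[R] ↥P →ₗ[S] S ⊗[R] ↥P))
          (LinearMap.rTensor (↥P) φ.toLinearMap w) =
        LinearMap.rTensor (↥P) φ.toLinearMap
          (((Polynomial.X : Polynomial R) • (LinearMap.id :
            Polynomial R ⊗[R] ↥P →ₗ[Polynomial R] Polynomial R ⊗[R] ↥P)) w) := by
    intro w
    have := smul_id_compat (N := ↥P) (Polynomial R) S φ Polynomial.X w
    rwa [hφ, Polynomial.aeval_X] at this
  have bc := F.map_baseChange P P hP₁ hP₂ hP₁ hP₂ (Polynomial R) S φ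
    ((Polynomial.X : Polynomial R) • LinearMap.id) (s • LinearMap.id) compat
    ((1 : Polynomial R) ⊗ₜ[R] x)
  rw [← hzdef] at bc
  have h1 : LinearMap.rTensor (↥(F.obj P hP₁ hP₂)) φ.toLinearMap ((1 : Polynomial R) ⊗ₜ[R] x)
      = (1 : S) ⊗ₜ[R] x := by
    rw [LinearMap.rTensor_tmul, AlgHom.toLinearMap_apply, map_one]
  rw [h1] at bc
  rw [bc, hzu, map_sum]
  have h2 : ∀ i ∈ Finset.range N₀,
      LinearMap.rTensor (↥(F.obj P hP₁ hP₂)) φ.toLinearMap (((Polynomial.X : Polynomial R) ^ i) ⊗ₜ[R] (u i x))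
        = (s ^ i) ⊗ₜ[R] (u i x) := fun i _ => by
    rw [LinearMap.rTensor_tmul, AlgHom.toLinearMap_apply, map_pow, hφ, Polynomial.aeval_X]
  rw [Finset.sum_congr rfl h2]
  refine (sum_pad _ (le_max_left N₀ N) fun i hi => ?_).trans
    (sum_pad _ (le_max_right N₀ N) fun i hi => ?_).symm
  · rw [hu0 i hi, tmul_zero]
  · rw [hN i hi, tmul_zero]

include hu in
lemma u_ortho (i j : ℕ) (x : ↥(F.obj P hP₁ hP₂)) :
    u i (u j x) = if i = j then u j x else 0 := by
  obtain ⟨N₁, hN₁⟩ := u_bound F P hP₁ hP₂ u hu x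
  choose g hg using fun y : ↥(F.obj P hP₁ hP₂) => u_bound F P hP₁ hP₂ u hu y
  set N : ℕ := max N₁ ((Finset.range N₁).sup fun j' => g (u j' x)) with hNdef
  have hNx : ∀ k, N ≤ k → u k x = 0 := fun k hk =>
    hN₁ k (le_trans (le_max_left _ _) hk)
  have hNu : ∀ j' k, N ≤ k → u k (u j' x) = 0 := by
    intro j' k hk
    by_cases hj' : j' < N₁
    · refine hg _ k (le_trans (le_trans (Finset.le_sup (f := fun j' => g (u j' x))
        (Finset.mem_range.2 hj')) (le_max_right N₁ _)) hk)
    · rw [hN₁ j' (not_lt.1 hj'), map_zero]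
  by_cases hiN : i < N
  · by_cases hjN : j < N
    · -- main case
      set T := Polynomial (Polynomial R) with hT
      set a : T := Polynomial.C (Polynomial.X : Polynomial R) with ha
      set b : T := (Polynomial.X : T) with hb
      have e1 := u_expand F P hP₁ hP₂ u hu x hNx T (a * b)
      have e2 := u_expand F P hP₁ hP₂ u hu x hNx T b
      have e3 : ∀ j', (F.map P P hP₁ hP₂ hP₁ hP₂ T (a • LinearMap.id))
          ((1 : T) ⊗ₜ[R] (u j' x)) = ∑ k ∈ Finset.range N, (a ^ k) ⊗ₜ[R] (u k (u j' x)) :=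
        fun j' => u_expand F P hP₁ hP₂ u hu (u j' x) (hNu j') T a
      have comp : F.map P P hP₁ hP₂ hP₁ hP₂ T ((a * b) • LinearMap.id) =
          (F.map P P hP₁ hP₂ hP₁ hP₂ T (a • LinearMap.id)) ∘ₗ
            (F.map P P hP₁ hP₂ hP₁ hP₂ T (b • LinearMap.id)) := by
        rw [smul_id_comp]
        exact F.map_comp P P P hP₁ hP₂ hP₁ hP₂ hP₁ hP₂ T _ _
      have E : ∑ k ∈ Finset.range N,
            ((Polynomial.C ((Polynomial.X : Polynomial R) ^ k) *
              (Polynomial.X : T) ^ k)) ⊗ₜ[R] (u k x) =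
          ∑ j' ∈ Finset.range N, ∑ k ∈ Finset.range N,
            ((Polynomial.C ((Polynomial.X : Polynomial R) ^ k) *
              (Polynomial.X : T) ^ j')) ⊗ₜ[R] (u k (u j' x)) := by
        have l1 : ∀ k : ℕ, (a * b) ^ k =
            Polynomial.C ((Polynomial.X : Polynomial R) ^ k) * (Polynomial.X : T) ^ k := by
          intro k; rw [mul_pow, ha, hb, ← map_pow]
        calc ∑ k ∈ Finset.range N,
              ((Polynomial.C ((Polynomial.X : Polynomial R) ^ k) *
                (Polynomial.X : T) ^ k)) ⊗ₜ[R] (u k x)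
            = ∑ k ∈ Finset.range N, ((a * b) ^ k) ⊗ₜ[R] (u k x) := by
              exact Finset.sum_congr rfl fun k _ => by rw [l1]
          _ = (F.map P P hP₁ hP₂ hP₁ hP₂ T ((a * b) • LinearMap.id)) ((1 : T) ⊗ₜ[R] x) :=
              e1.symm
          _ = (F.map P P hP₁ hP₂ hP₁ hP₂ T (a • LinearMap.id))
                ((F.map P P hP₁ hP₂ hP₁ hP₂ T (b • LinearMap.id)) ((1 : T) ⊗ₜ[R] x)) := by
              rw [comp]; rfl
          _ = ∑ j' ∈ Finset.range N, (F.map P P hP₁ hP₂ hP₁ hP₂ T (a • LinearMap.id))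
                ((b ^ j') ⊗ₜ[R] (u j' x)) := by
              rw [e2, map_sum]
          _ = ∑ j' ∈ Finset.range N, ∑ k ∈ Finset.range N,
                ((Polynomial.C ((Polynomial.X : Polynomial R) ^ k) *
                  (Polynomial.X : T) ^ j')) ⊗ₜ[R] (u k (u j' x)) := by
              refine Finset.sum_congr rfl fun j' _ => ?_
              have : (b ^ j') ⊗ₜ[R] (u j' x) = (b ^ j') • ((1 : T) ⊗ₜ[R] (u j' x)) := by
                rw [smul_tmul', smul_eq_mul, mul_one]
              rw [this, map_smul, e3 j', Finset.smul_sum]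
              refine Finset.sum_congr rfl fun k _ => ?_
              rw [smul_tmul', smul_eq_mul, ha, hb, ← map_pow, mul_comm]
      have EX := congrArg (fun v => coeffT i (coeffS (Polynomial R) j v)) E
      simp only [map_sum, chi_term] at EX
      rw [Finset.sum_ite_eq, if_pos (Finset.mem_range.2 hjN)] at EX
      have hR : ∀ j' ∈ Finset.range N, (∑ k ∈ Finset.range N,
          if j = j' then (if i = k then u k (u j' x) else 0) else 0) =
          if j = j' then u i (u j' x) else 0 := by
        intro j' _
        by_cases h : j = j'
        · simp only [if_pos h, Finset.sum_ite_eq, if_pos (Finset.mem_range.2 hiN)]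
        · simp only [if_neg h, Finset.sum_const_zero]
      rw [Finset.sum_congr rfl hR, Finset.sum_ite_eq, if_pos (Finset.mem_range.2 hjN)] at EX
      exact EX.symm
    · have h0 : u j x = 0 := hNx j (not_lt.1 hjN)
      rw [h0, map_zero]
      split <;> simp [h0]
  · have h0 : u i (u j x) = 0 := hNu j i (not_lt.1 hiN)
    rw [h0]
    by_cases h : i = j
    · subst h; rw [hNx i (not_lt.1 hiN), if_pos rfl]
    · rw [if_neg h]

include hu in
lemma u_complete (x : ↥(F.obj P hP₁ hP₂)) : ∑ᶠ i, u i x = x := by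
  obtain ⟨N, hN⟩ := u_bound F P hP₁ hP₂ u hu x
  have hsupp : (Function.support fun i => u i x) ⊆ ↑(Finset.range N) := fun i hi =>
    Finset.mem_coe.2 (Finset.mem_range.2 (lt_of_not_ge fun h => hi (hN i h)))
  rw [finsum_eq_sum_of_support_subset _ hsupp]
  have e := u_expand F P hP₁ hP₂ u hu x hN R (1 : R)
  rw [one_smul, F.map_id] at e
  have e2 := congrArg (TensorProduct.lid R ↥(F.obj P hP₁ hP₂)) e
  simp only [LinearMap.id_apply, map_sum, one_pow, TensorProduct.lid_tmul, one_smul] at e2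
  exact e2.symm

include hu in
lemma u_homog (i : ℕ) (S : Type u) [CommRing S] [Algebra R S] (s : S)
    (x : ↥(F.obj P hP₁ hP₂)) :
    (F.map P P hP₁ hP₂ hP₁ hP₂ S (s • LinearMap.id)) ((1 : S) ⊗ₜ[R] (u i x)) =
      s ^ i • ((1 : S) ⊗ₜ[R] (u i x)) := by
  obtain ⟨N₀, hN₀⟩ := u_bound F P hP₁ hP₂ u hu x
  set N : ℕ := max N₀ (i + 1) with hNdef
  have hN : ∀ k, N ≤ k → u k x = 0 := fun k hk => hN₀ k (le_trans (le_max_left _ _) hk)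
  have hiN : i < N := lt_of_lt_of_le (Nat.lt_succ_self i) (le_max_right _ _)
  set T := Polynomial S with hT
  set φ : S →ₐ[R] T := IsScalarTower.toAlgHom R S T with hφ
  have hφs : ∀ t : S, φ t = Polynomial.C t := fun t => by
    rw [hφ, IsScalarTower.coe_toAlgHom', Polynomial.algebraMap_eq]
  have eL := u_expand F P hP₁ hP₂ u hu x hN T (Polynomial.C s * Polynomial.X)
  have eX := u_expand F P hP₁ hP₂ u hu x hN T (Polynomial.X : T)
  have comp : F.map P P hP₁ hP₂ hP₁ hP₂ T ((Polynomial.C s * Polynomial.X) • LinearMap.id) =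
      (F.map P P hP₁ hP₂ hP₁ hP₂ T (Polynomial.C s • LinearMap.id)) ∘ₗ
        (F.map P P hP₁ hP₂ hP₁ hP₂ T ((Polynomial.X : T) • LinearMap.id)) := by
    rw [smul_id_comp]
    exact F.map_comp P P P hP₁ hP₂ hP₁ hP₂ hP₁ hP₂ T _ _
  have bc : ∀ m : ↥(F.obj P hP₁ hP₂),
      (F.map P P hP₁ hP₂ hP₁ hP₂ T (Polynomial.C s • LinearMap.id)) ((1 : T) ⊗ₜ[R] m) =
        LinearMap.rTensor (↥(F.obj P hP₁ hP₂)) φ.toLinearMap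
          ((F.map P P hP₁ hP₂ hP₁ hP₂ S (s • LinearMap.id)) ((1 : S) ⊗ₜ[R] m)) := by
    intro m
    have compat : ∀ w : S ⊗[R] ↥P,
        ((Polynomial.C s • LinearMap.id : T ⊗[R] ↥P →ₗ[T] T ⊗[R] ↥P))
            (LinearMap.rTensor (↥P) φ.toLinearMap w) =
          LinearMap.rTensor (↥P) φ.toLinearMap
            ((s • LinearMap.id : S ⊗[R] ↥P →ₗ[S] S ⊗[R] ↥P) w) := fun w => by
      have := smul_id_compat S T φ s w
      rwa [hφs] at this
    have h := F.map_baseChange P P hP₁ hP₂ hP₁ hP₂ S T φ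
      (s • LinearMap.id) (Polynomial.C s • LinearMap.id) compat ((1 : S) ⊗ₜ[R] m)
    rwa [show LinearMap.rTensor (↥(F.obj P hP₁ hP₂)) φ.toLinearMap ((1 : S) ⊗ₜ[R] m)
        = (1 : T) ⊗ₜ[R] m by rw [LinearMap.rTensor_tmul, AlgHom.toLinearMap_apply, map_one]]
      at h
  have E : ∑ k ∈ Finset.range N,
        ((Polynomial.C (s ^ k) * (Polynomial.X : T) ^ k)) ⊗ₜ[R] (u k x) =
      ∑ j ∈ Finset.range N, ((Polynomial.X : T) ^ j) •
        LinearMap.rTensor (↥(F.obj P hP₁ hP₂)) φ.toLinearMap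
          ((F.map P P hP₁ hP₂ hP₁ hP₂ S (s • LinearMap.id)) ((1 : S) ⊗ₜ[R] (u j x))) := by
    calc ∑ k ∈ Finset.range N,
          ((Polynomial.C (s ^ k) * (Polynomial.X : T) ^ k)) ⊗ₜ[R] (u k x)
        = ∑ k ∈ Finset.range N, (((Polynomial.C s * Polynomial.X : T)) ^ k) ⊗ₜ[R] (u k x) :=
          Finset.sum_congr rfl fun k _ => by rw [mul_pow, map_pow]
      _ = (F.map P P hP₁ hP₂ hP₁ hP₂ T ((Polynomial.C s * Polynomial.X) • LinearMap.id))
            ((1 : T) ⊗ₜ[R] x) := eL.symm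
      _ = (F.map P P hP₁ hP₂ hP₁ hP₂ T (Polynomial.C s • LinearMap.id))
            ((F.map P P hP₁ hP₂ hP₁ hP₂ T ((Polynomial.X : T) • LinearMap.id))
              ((1 : T) ⊗ₜ[R] x)) := by rw [comp]; rfl
      _ = ∑ j ∈ Finset.range N, (F.map P P hP₁ hP₂ hP₁ hP₂ T (Polynomial.C s • LinearMap.id))
            (((Polynomial.X : T) ^ j) ⊗ₜ[R] (u j x)) := by rw [eX, map_sum]
      _ = _ := by
          refine Finset.sum_congr rfl fun j _ => ?_
          have h1 : ((Polynomial.X : T) ^ j) ⊗ₜ[R] (u j x) =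
              ((Polynomial.X : T) ^ j) • ((1 : T) ⊗ₜ[R] (u j x)) := by
            rw [smul_tmul', smul_eq_mul, mul_one]
          rw [h1, map_smul, bc]
  have EX := congrArg (coeffS S i) E
  simp only [map_sum] at EX
  rw [Finset.sum_congr rfl (fun k _ => coeffS_CmulXpow S i k (s ^ k) (u k x)),
    Finset.sum_ite_eq, if_pos (Finset.mem_range.2 hiN),
    Finset.sum_congr rfl (fun j _ => coeffS_smul_rTensor S i j _),
    Finset.sum_ite_eq, if_pos (Finset.mem_range.2 hiN)] at EX
  rw [← EX, smul_tmul', smul_eq_mul, mul_one]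

end spf

/-- Homogeneous decomposition of a strict polynomial functor over a Noetherian
ring: for each finitely generated projective `P`, the operators
`u_i ∈ End_R(F(P))` defined by `F(t • id) = ∑ tⁱ ⊗ u_i` over `R[t]` (i.e. `u_i x`
is the coefficient of `tⁱ` in `F(t • id)(1 ⊗ x)`) form a complete system of
orthogonal idempotents, whose images are the homogeneous components of degree `i`:
`F(s • id)` acts on the image of `u_i` as `sⁱ`. -/
theorem spf_homogeneous_decomposition (R : Type u) [CommRing R] [IsNoetherianRing R]
    (F : SPF R) (P : ModuleCat.{u} R)
    (hP₁ : Module.Finite R ↥P) (hP₂ : Module.Projective R ↥P)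
    (u : ℕ → Module.End R ↥(F.obj P hP₁ hP₂))
    (hu : ∀ (i : ℕ) (x : ↥(F.obj P hP₁ hP₂)),
      u i x = (TensorProduct.lid R ↥(F.obj P hP₁ hP₂))
        (LinearMap.rTensor (↥(F.obj P hP₁ hP₂)) (Polynomial.lcoeff R i)
          ((F.map P P hP₁ hP₂ hP₁ hP₂ (Polynomial R)
              ((Polynomial.X : Polynomial R) • LinearMap.id))
            ((1 : Polynomial R) ⊗ₜ[R] x)))) :
    (∀ i, u i ∘ₗ u i = u i) ∧
    (∀ i j, i ≠ j → u i ∘ₗ u j = 0) ∧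
    (∀ x : ↥(F.obj P hP₁ hP₂), ∑ᶠ i, u i x = x) ∧
    (∀ (i : ℕ) (S : Type u) [CommRing S] [Algebra R S] (s : S) (x : ↥(F.obj P hP₁ hP₂)),
      (F.map P P hP₁ hP₂ hP₁ hP₂ S (s • LinearMap.id)) ((1 : S) ⊗ₜ[R] (u i x)) =
        s ^ i • ((1 : S) ⊗ₜ[R] (u i x))) := by
  refine ⟨fun i => ?_, fun i j hij => ?_, u_complete F P hP₁ hP₂ u hu,
    fun i S _ _ s x => u_homog F P hP₁ hP₂ u hu i S s x⟩
  · ext x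
    have h := u_ortho F P hP₁ hP₂ u hu i i x
    simpa using h
  · ext x
    have h := u_ortho F P hP₁ hP₂ u hu i j x
    simpa [hij] using h
end

section
/- If F is a homogeneous strict polynomial functor of degree n over a commutative Noetherian ring R and F(R^n) = 0, then F(P) = 0 for every finitely generated projective R-module P. -/
open TensorProduct

universe u

/-- A strict polynomial functor is homogeneous of degree `n` if
`F(λ • id) = λ ^ n • id` for every scalar `λ` of every `R`-algebra `S`. -/
def SPF.Homog {R : Type u} [CommRing R] (F : SPF R) (n : ℕ) : Prop :=
  ∀ (P : ModuleCat.{u} R) (hP₁ : Module.Finite R ↥P) (hP₂ : Module.Projective R ↥P)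
    (S : Type u) [CommRing S] [Algebra R S] (s : S),
    F.map P P hP₁ hP₂ hP₁ hP₂ S (s • LinearMap.id) = s ^ n • LinearMap.id

/-!
`F(P)` is a retract of `F(Rᵐ)` for any `m` large enough, so it suffices to show `F(Rᵐ) = 0` for
`m ≥ n`. For `v ∈ F(Rᵐ)` apply `F` to the generic diagonal matrix `diag(X₁, …, Xₘ)` over
`R[X₁, …, Xₘ]` and write `F(diag X)(1 ⊗ v) = ∑_d X^d ⊗ w_d`. Substituting `Xⱼ ↦ X₀Xⱼ` and
comparing with homogeneity shows `w_d = 0` unless `|d| = n`. A monomial of degree `n` involves at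
most `n` variables; setting all other variables to `0` makes `diag X` factor through `Rⁿ`, on
which `F` vanishes, so these `w_d` vanish as well. Specializing `Xⱼ ↦ 1` then gives `1 ⊗ v = 0`.
-/

open MvPolynomial

theorem Finset.exists_injective_subset_range {α : Type*} [Fintype α] {s : Finset α} {n : ℕ}
    (hsn : s.card ≤ n) (hn : n ≤ Fintype.card α) :
    ∃ u : Fin n → α, Function.Injective u ∧ ↑s ⊆ Set.range u := by
  obtain ⟨t, hst, rfl⟩ := Finset.exists_superset_card_eq hsn hn
  exact ⟨Subtype.val ∘ t.equivFin.symm, Subtype.val_injective.comp t.equivFin.symm.injective,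
    fun x hx => ⟨t.equivFin ⟨x, hst hx⟩, by simp⟩⟩

theorem Finsupp.card_support_le_degree {σ : Type*} (d : σ →₀ ℕ) : d.support.card ≤ d.degree := by
  rw [Finsupp.degree_apply, Finset.card_eq_sum_ones]
  exact Finset.sum_le_sum fun i hi => Nat.one_le_iff_ne_zero.2 (Finsupp.mem_support_iff.1 hi)

theorem LinearMap.funLeft_comp_extendByZero (R : Type*) [Semiring R] {ι η : Type*} {u : ι → η}
    (hu : Function.Injective u) :
    LinearMap.funLeft R R u ∘ₗ Function.ExtendByZero.linearMap R u = LinearMap.id :=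
  LinearMap.ext fun g => funext fun i => hu.extend_apply g 0 i

namespace MvPolynomial

variable {R : Type*} [CommSemiring R] {σ τ : Type*} {V : Type*} [AddCommMonoid V] [Module R V]

variable (R σ V) in
/-- The coefficients `w_d` of `w = ∑_d X^d ⊗ₜ w_d`. -/
noncomputable def scalarRTensor : MvPolynomial σ R ⊗[R] V ≃ₗ[R] (σ →₀ ℕ) →₀ V :=
  letI := Classical.decEq (σ →₀ ℕ)
  equivFinsuppOfBasisLeft (basisMonomials σ R)

theorem scalarRTensor_tmul_apply (p : MvPolynomial σ R) (v : V) (d : σ →₀ ℕ) :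
    scalarRTensor R σ V (p ⊗ₜ v) d = coeff d p • v :=
  letI := Classical.decEq (σ →₀ ℕ)
  equivFinsuppOfBasisLeft_apply_tmul_apply _ _ _ _ |>.trans rfl

theorem scalarRTensor_monomial_tmul (e : σ →₀ ℕ) (r : R) (v : V) :
    scalarRTensor R σ V (monomial e r ⊗ₜ v) = Finsupp.single e (r • v) := by
  classical
  ext d
  rw [scalarRTensor_tmul_apply, coeff_monomial, Finsupp.single_apply]
  split_ifs <;> simp

theorem scalarRTensor_rTensor_apply (φ : MvPolynomial σ R →ₗ[R] MvPolynomial τ R)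
    (w : MvPolynomial σ R ⊗[R] V) (d : τ →₀ ℕ) :
    scalarRTensor R τ V (φ.rTensor V w) d =
      (scalarRTensor R σ V w).sum fun e v => coeff d (φ (monomial e 1)) • v := by
  classical
  induction w using TensorProduct.induction_on with
  | zero => simp
  | add x y hx hy =>
    rw [map_add, map_add, Finsupp.add_apply, hx, hy, map_add,
      Finsupp.sum_add_index' (by simp) fun _ _ _ => smul_add _ _ _]
  | tmul p v =>
    induction p using MvPolynomial.induction_on' with
    | monomial e r =>
      rw [LinearMap.rTensor_tmul, scalarRTensor_tmul_apply, scalarRTensor_monomial_tmul,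
        Finsupp.sum_single_index (by simp), smul_smul, mul_comm,
        ← smul_eq_mul, ← coeff_smul, ← map_smul, smul_monomial, smul_eq_mul, mul_one]
    | add p q hp hq =>
      rw [add_tmul, map_add, map_add, Finsupp.add_apply, hp, hq, map_add,
        Finsupp.sum_add_index' (by simp) fun _ _ _ => smul_add _ _ _]

theorem X_zero_pow_mul_rename_succ_monomial {m : ℕ} (a : ℕ) (e : Fin m →₀ ℕ) :
    X 0 ^ a * rename Fin.succ (monomial e (1 : R)) = monomial (Finsupp.cons a e) 1 := by
  simp [monomial_eq, Finsupp.prod_fintype, Fin.prod_univ_succ, Finsupp.cons_zero, Finsupp.cons_succ]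

theorem aeval_X_zero_mul_X_succ_monomial {m : ℕ} (e : Fin m →₀ ℕ) :
    aeval (fun j : Fin m => (X 0 * X j.succ : MvPolynomial (Fin (m + 1)) R)) (monomial e (1 : R)) =
      monomial (Finsupp.cons e.degree e) 1 := by
  rw [← X_zero_pow_mul_rename_succ_monomial]
  simp [monomial_eq, Finsupp.prod_fintype, mul_pow, Finset.prod_mul_distrib,
    Finset.prod_pow_eq_pow_sum, Finsupp.degree_eq_sum]

theorem coeff_aeval_indicator_X_monomial {σ : Type*} [DecidableEq σ] {s : Set σ} {d : σ →₀ ℕ}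
    (hd : ↑d.support ⊆ s) (e : σ →₀ ℕ) :
    coeff d (aeval (s.indicator (X : σ → MvPolynomial σ R)) (monomial e (1 : R))) =
      if e = d then 1 else 0 := by
  rw [aeval_monomial, map_one, one_mul]
  by_cases he : ↑e.support ⊆ s
  · have : (e.prod fun j k => s.indicator (X : σ → MvPolynomial σ R) j ^ k) =
        monomial e (1 : R) := by
      rw [monomial_eq, C_1, one_mul]
      exact Finsupp.prod_congr fun j hj => by rw [Set.indicator_of_mem (he hj)]
    rw [this, coeff_monomial]
  · obtain ⟨j, hj, hjs⟩ := Set.not_subset.1 he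
    have : (e.prod fun j k => s.indicator (X : σ → MvPolynomial σ R) j ^ k) = 0 :=
      Finset.prod_eq_zero hj (by simp [Set.indicator_of_notMem hjs, Finsupp.mem_support_iff.1 hj])
    rw [this, coeff_zero, if_neg (by rintro rfl; exact he hd)]

end MvPolynomial

section BaseChangeDiagonal

variable (R : Type*) [CommSemiring R] {ι : Type*} [Fintype ι] [DecidableEq ι]
  (S : Type*) [CommSemiring S] [Algebra R S]

noncomputable def baseChangeDiagonal (t : ι → S) : S ⊗[R] (ι → R) →ₗ[S] S ⊗[R] (ι → R) :=
  ∑ i, t i • (LinearMap.single R (fun _ => R) i ∘ₗ LinearMap.proj i).baseChange S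

variable {R S}

theorem baseChangeDiagonal_tmul (t : ι → S) (s : S) (y : ι → R) :
    baseChangeDiagonal R S t (s ⊗ₜ y) = ∑ i, (t i * s) ⊗ₜ Pi.single i (y i) := by
  simp [baseChangeDiagonal, smul_tmul']

theorem baseChangeDiagonal_one : baseChangeDiagonal R S (1 : ι → S) = LinearMap.id := by
  ext y
  simp [baseChangeDiagonal_tmul, ← tmul_sum, Finset.univ_sum_single]

theorem baseChangeDiagonal_const_mul (s : S) (t : ι → S) :
    baseChangeDiagonal R S (fun i => s * t i) = s • baseChangeDiagonal R S t := by
  simp only [baseChangeDiagonal, mul_smul, Finset.smul_sum]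

theorem rTensor_baseChangeDiagonal {S' : Type*} [CommSemiring S'] [Algebra R S']
    (φ : S →ₐ[R] S') (t : ι → S) (x : S ⊗[R] (ι → R)) :
    φ.toLinearMap.rTensor _ (baseChangeDiagonal R S t x) =
      baseChangeDiagonal R S' (φ ∘ t) (φ.toLinearMap.rTensor _ x) := by
  induction x using TensorProduct.induction_on with
  | zero => simp
  | add x y hx hy => simp only [map_add, hx, hy]
  | tmul s y => simp [baseChangeDiagonal_tmul]

theorem baseChangeDiagonal_comp_extendByZero_funLeft {κ : Type*} {u : κ → ι}
    (hu : Function.Injective u) (t : ι → S) :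
    baseChangeDiagonal R S t ∘ₗ
        (Function.ExtendByZero.linearMap R u ∘ₗ LinearMap.funLeft R R u).baseChange S =
      baseChangeDiagonal R S ((Set.range u).indicator t) := by
  refine TensorProduct.AlgebraTensorModule.ext fun s y => ?_
  simp only [LinearMap.comp_apply, LinearMap.baseChange_tmul, baseChangeDiagonal_tmul]
  refine Finset.sum_congr rfl fun i _ => ?_
  by_cases hi : i ∈ Set.range u
  · obtain ⟨k, rfl⟩ := hi
    simp [hu.extend_apply]
  · simp [Set.indicator_of_notMem hi, Function.extend_apply' _ _ _ (by simpa using hi)]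

end BaseChangeDiagonal

instance (R : Type u) [CommRing R] (m : ℕ) : Module.Finite R (ModuleCat.of R (Fin m → R)) :=
  inferInstanceAs (Module.Finite R (Fin m → R))

instance (R : Type u) [CommRing R] (m : ℕ) : Module.Projective R (ModuleCat.of R (Fin m → R)) :=
  inferInstanceAs (Module.Projective R (Fin m → R))

namespace SPF

variable {R : Type u} [CommRing R] (F : SPF R) {m : ℕ}

theorem map_comp_eq_zero {P Q Q' : ModuleCat.{u} R}
    (hP₁ : Module.Finite R P) (hP₂ : Module.Projective R P)
    (hQ₁ : Module.Finite R Q) (hQ₂ : Module.Projective R Q)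
    (hQ'₁ : Module.Finite R Q') (hQ'₂ : Module.Projective R Q')
    [Subsingleton (F.obj Q' hQ'₁ hQ'₂)] (S : Type u) [CommRing S] [Algebra R S]
    (f : S ⊗[R] P →ₗ[S] S ⊗[R] Q') (g : S ⊗[R] Q' →ₗ[S] S ⊗[R] Q) :
    F.map P Q hP₁ hP₂ hQ₁ hQ₂ S (g ∘ₗ f) = 0 := by
  rw [F.map_comp P Q' Q hP₁ hP₂ hQ'₁ hQ'₂ hQ₁ hQ₂]
  exact LinearMap.ext fun x => by
    rw [LinearMap.comp_apply, Subsingleton.elim (F.map P Q' hP₁ hP₂ hQ'₁ hQ'₂ S f x) 0, map_zero,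
      LinearMap.zero_apply]

theorem subsingleton_obj_of_retract {P Q : ModuleCat.{u} R}
    (hP₁ : Module.Finite R P) (hP₂ : Module.Projective R P)
    (hQ₁ : Module.Finite R Q) (hQ₂ : Module.Projective R Q) [Subsingleton (F.obj Q hQ₁ hQ₂)]
    (i : P →ₗ[R] Q) (p : Q →ₗ[R] P) (hpi : p ∘ₗ i = LinearMap.id) :
    Subsingleton (F.obj P hP₁ hP₂) := by
  have hid : (LinearMap.id : R ⊗[R] F.obj P hP₁ hP₂ →ₗ[R] _) = 0 := by
    rw [← F.map_id P hP₁ hP₂ R, ← LinearMap.baseChange_id, ← hpi, LinearMap.baseChange_comp]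
    exact F.map_comp_eq_zero hP₁ hP₂ hP₁ hP₂ hQ₁ hQ₂ R _ _
  refine subsingleton_of_forall_eq 0 fun x => (TensorProduct.lid R _).symm.injective ?_
  rw [map_zero]
  exact LinearMap.congr_fun hid _

abbrev objFree (m : ℕ) : ModuleCat.{u} R :=
  F.obj (ModuleCat.of R (Fin m → R)) inferInstance inferInstance

noncomputable def mapDiagonal (S : Type u) [CommRing S] [Algebra R S] (t : Fin m → S)
    (v : F.objFree m) : S ⊗[R] F.objFree m :=
  F.map _ _ _ _ _ _ S (baseChangeDiagonal R S t) (1 ⊗ₜ v)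

theorem rTensor_mapDiagonal {S S' : Type u} [CommRing S] [Algebra R S] [CommRing S']
    [Algebra R S'] (φ : S →ₐ[R] S') (t : Fin m → S) (v : F.objFree m) :
    φ.toLinearMap.rTensor _ (F.mapDiagonal S t v) = F.mapDiagonal S' (φ ∘ t) v := by
  rw [mapDiagonal, mapDiagonal, ← F.map_baseChange _ _ _ _ _ _ S S' φ _ _
    fun x => (rTensor_baseChangeDiagonal φ t x).symm]
  simp

theorem mapDiagonal_one (S : Type u) [CommRing S] [Algebra R S] (v : F.objFree m) :
    F.mapDiagonal S 1 v = 1 ⊗ₜ v := by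
  rw [mapDiagonal, baseChangeDiagonal_one, F.map_id, LinearMap.id_apply]

theorem mapDiagonal_const_mul {n : ℕ} (hF : F.Homog n) {S : Type u} [CommRing S] [Algebra R S]
    (s : S) (t : Fin m → S) (v : F.objFree m) :
    F.mapDiagonal S (fun i => s * t i) v = s ^ n • F.mapDiagonal S t v := by
  rw [mapDiagonal, baseChangeDiagonal_const_mul, ← LinearMap.id_comp (baseChangeDiagonal R S t),
    ← LinearMap.smul_comp]
  rw [F.map_comp (ModuleCat.of R (Fin m → R)) (ModuleCat.of R (Fin m → R))
    (ModuleCat.of R (Fin m → R)), hF]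
  rfl

theorem mapDiagonal_indicator_eq_zero {k : ℕ} [Subsingleton (F.objFree k)] {u : Fin k → Fin m}
    (hu : Function.Injective u) {S : Type u} [CommRing S] [Algebra R S] (t : Fin m → S)
    (v : F.objFree m) : F.mapDiagonal S ((Set.range u).indicator t) v = 0 := by
  rw [mapDiagonal, ← baseChangeDiagonal_comp_extendByZero_funLeft hu, LinearMap.baseChange_comp,
    ← LinearMap.comp_assoc, F.map_comp_eq_zero (Q' := ModuleCat.of R (Fin k → R))]
  rfl

theorem scalarRTensor_mapDiagonal_X_of_degree_ne {n : ℕ} (hF : F.Homog n) (v : F.objFree m)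
    {d : Fin m →₀ ℕ} (hd : d.degree ≠ n) :
    scalarRTensor R (Fin m) _ (F.mapDiagonal (MvPolynomial (Fin m) R) X v) d = 0 := by
  set w := F.mapDiagonal (MvPolynomial (Fin m) R) X v
  set φ := aeval (R := R) fun j : Fin m => (X 0 * X j.succ : MvPolynomial (Fin (m + 1)) R)
    with hφ_def
  set ψ := Algebra.lsmul R R _ (X 0 ^ n : MvPolynomial (Fin (m + 1)) R) ∘ₗ
    (rename (R := R) (Fin.succ : Fin m → Fin (m + 1))).toLinearMap
  -- `φ` multiplies `w_e` by `X₀ ^ |e|`, while by homogeneity it multiplies all of `w` by `X₀ ^ n`.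
  have key : φ.toLinearMap.rTensor _ w = ψ.rTensor _ w := by
    rw [LinearMap.rTensor_comp_apply, rTensor_mapDiagonal, rTensor_mapDiagonal]
    simp only [Function.comp_def, φ, aeval_X, rename_X]
    rw [mapDiagonal_const_mul F hF]
    rfl
  have hφ (e : Fin m →₀ ℕ) : coeff (Finsupp.cons n d) (φ (monomial e 1)) = 0 := by
    rw [hφ_def, aeval_X_zero_mul_X_succ_monomial, coeff_monomial, if_neg]
    rintro h
    obtain ⟨h1, rfl⟩ := Finsupp.cons_injective2 h
    exact hd h1
  have hψ (e : Fin m →₀ ℕ) :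
      coeff (Finsupp.cons n d) (ψ (monomial e 1)) = if e = d then 1 else 0 := by
    change coeff _ (X 0 ^ n * rename Fin.succ (monomial e (1 : R))) = _
    rw [X_zero_pow_mul_rename_succ_monomial, coeff_monomial]
    simp_rw [(Finsupp.cons_right_injective (y := n)).eq_iff]
  have := congr(scalarRTensor R _ _ $key (Finsupp.cons n d))
  rw [scalarRTensor_rTensor_apply, scalarRTensor_rTensor_apply] at this
  simpa [hφ, hψ] using this.symm

theorem scalarRTensor_mapDiagonal_X_of_support_subset {n : ℕ} [Subsingleton (F.objFree n)]
    {u : Fin n → Fin m} (hu : Function.Injective u) (v : F.objFree m) {d : Fin m →₀ ℕ}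
    (hd : ↑d.support ⊆ Set.range u) :
    scalarRTensor R (Fin m) _ (F.mapDiagonal (MvPolynomial (Fin m) R) X v) d = 0 := by
  set ψ := aeval (R := R) ((Set.range u).indicator (X : Fin m → MvPolynomial (Fin m) R))
  have key : ψ.toLinearMap.rTensor _ (F.mapDiagonal (MvPolynomial (Fin m) R) X v) = 0 := by
    rw [rTensor_mapDiagonal]
    convert F.mapDiagonal_indicator_eq_zero hu X v
    ext j
    simp [ψ]
  have := congr(scalarRTensor R _ _ $key d)
  rw [scalarRTensor_rTensor_apply] at this
  simp only [ψ, AlgHom.toLinearMap_apply, coeff_aeval_indicator_X_monomial hd] at this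
  simpa using this

theorem subsingleton_objFree_of_le {n : ℕ} (hF : F.Homog n) [Subsingleton (F.objFree n)]
    (hnm : n ≤ m) : Subsingleton (F.objFree m) := by
  refine subsingleton_of_forall_eq 0 fun v => ?_
  have hw : F.mapDiagonal (MvPolynomial (Fin m) R) X v = 0 := by
    refine (scalarRTensor R (Fin m) _).map_eq_zero_iff.mp (Finsupp.ext fun d => ?_)
    by_cases hd : d.degree = n
    · obtain ⟨u, hu, hdu⟩ := Finset.exists_injective_subset_range
        (hd ▸ d.card_support_le_degree) (by simpa using hnm)
      exact F.scalarRTensor_mapDiagonal_X_of_support_subset hu v hdu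
    · exact F.scalarRTensor_mapDiagonal_X_of_degree_ne hF v hd
  have := congr((aeval (1 : Fin m → R)).toLinearMap.rTensor _ $hw)
  rw [rTensor_mapDiagonal, map_zero, show ⇑(aeval (1 : Fin m → R)) ∘ X = 1 from
    funext fun j => aeval_X _ j, mapDiagonal_one] at this
  simpa using congr(TensorProduct.lid R _ $this)

end SPF

theorem spf_vanishes_of_vanishes_on_free_general (R : Type u) [CommRing R]
    (F : SPF R) (n : ℕ) (hF : F.Homog n)
    (h₁ : Module.Finite R ↥(ModuleCat.of R (Fin n → R)))
    (h₂ : Module.Projective R ↥(ModuleCat.of R (Fin n → R)))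
    (hzero : Subsingleton ↥(F.obj (ModuleCat.of R (Fin n → R)) h₁ h₂)) :
    ∀ (P : ModuleCat.{u} R) (hP₁ : Module.Finite R ↥P) (hP₂ : Module.Projective R ↥P),
      Subsingleton ↥(F.obj P hP₁ hP₂) := by
  intro P hP₁ hP₂
  obtain ⟨m, f, g, -, -, hfg⟩ := Module.Finite.exists_comp_eq_id_of_projective R P
  have : Subsingleton (F.objFree n) := hzero
  have := F.subsingleton_objFree_of_le hF (le_max_left n m)
  let u : Fin m → Fin (max n m) := Fin.castLE (le_max_right n m)
  refine F.subsingleton_obj_of_retract (Q := ModuleCat.of R (Fin (max n m) → R)) hP₁ hP₂ _ _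
    (Function.ExtendByZero.linearMap R u ∘ₗ g) (f ∘ₗ LinearMap.funLeft R R u) ?_
  change f ∘ₗ (LinearMap.funLeft R R u ∘ₗ Function.ExtendByZero.linearMap R u) ∘ₗ g = _
  rw [LinearMap.funLeft_comp_extendByZero R (Fin.castLE_injective _), LinearMap.id_comp, hfg]

/-- If a homogeneous strict polynomial functor of degree `n` over a commutative
Noetherian ring vanishes on `Rⁿ`, it vanishes on every finitely generated
projective module. -/
theorem spf_vanishes_of_vanishes_on_free (R : Type u) [CommRing R] [IsNoetherianRing R]
    (F : SPF R) (n : ℕ) (hF : F.Homog n)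
    (h₁ : Module.Finite R ↥(ModuleCat.of R (Fin n → R)))
    (h₂ : Module.Projective R ↥(ModuleCat.of R (Fin n → R)))
    (hzero : Subsingleton ↥(F.obj (ModuleCat.of R (Fin n → R)) h₁ h₂)) :
    ∀ (P : ModuleCat.{u} R) (hP₁ : Module.Finite R ↥P) (hP₂ : Module.Projective R ↥P),
      Subsingleton ↥(F.obj P hP₁ hP₂) :=
  spf_vanishes_of_vanishes_on_free_general R F n hF h₁ h₂ hzero
end

section
/- Let α, β, γ be finite multisets. Every bimultijection from α ⊔ β to γ factors uniquely as h ∘ (f ⊔ g), where f : α → α′ and g : β → β′ are bimultijection data on each component and h : α′ ⊔ β′ → γ is a multi-shuffle (the induced multijection from a disjoint union onto the sum multiset γ = α′ + β′). -/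
/-- `G` is (the matrix of multiplicities of) a bimultijection from `S` to `T`:
a submultiset of `S × T` both of whose projections are multijections, i.e. whose
marginals are `S` and `T`. -/
def IsBimultijection {ι κ : Type*} (G : (ι × κ) →₀ ℕ) (S : ι →₀ ℕ) (T : κ →₀ ℕ) : Prop :=
  (∀ x : ι, S x = ∑ᶠ y : κ, G (x, y)) ∧ (∀ y : κ, T y = ∑ᶠ x : ι, G (x, y))

/-!
The components `f` and `g` are forced: they are the restrictions of `G` to the rows indexed by
`ι` and by `κ`. Their column marginals are then forced to be `α′` and `β′`, and these add up to
`γ` because each column sum of `G` splits into its `ι`-part and its `κ`-part.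
-/

open Function

theorem finsum_sumElim_split {ι κ M : Type*} [AddCommMonoid M] {f : ι ⊕ κ → M}
    (hf : f.HasFiniteSupport) :
    ∑ᶠ x, f x = ∑ᶠ i, f (Sum.inl i) + ∑ᶠ j, f (Sum.inr j) := by
  rw [← finsum_mem_univ, ← Set.range_inl_union_range_inr,
    finsum_mem_union' Set.isCompl_range_inl_range_inr.disjoint (hf.inter_of_right _)
      (hf.inter_of_right _),
    finsum_mem_range Sum.inl_injective, finsum_mem_range Sum.inr_injective]

namespace Finsupp

variable {ι κ μ M : Type*} [AddCommMonoid M]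

noncomputable def sndMarginal (F : (ι × κ) →₀ M) : κ →₀ M :=
  ofSupportFinite (fun y => ∑ᶠ x, F (x, y)) <|
    (Set.Finite.image Prod.snd F.hasFiniteSupport).subset fun y hy => by
      by_contra hy'
      exact hy <| finsum_eq_zero_of_forall_eq_zero fun x =>
        not_not.1 fun hx => hy' ⟨(x, y), hx, rfl⟩

noncomputable def inlRows (G : ((ι ⊕ κ) × μ) →₀ M) : (ι × μ) →₀ M :=
  comapDomain (Prod.map Sum.inl id) G (Sum.inl_injective.prodMap injective_id).injOn

noncomputable def inrRows (G : ((ι ⊕ κ) × μ) →₀ M) : (κ × μ) →₀ M :=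
  comapDomain (Prod.map Sum.inr id) G (Sum.inr_injective.prodMap injective_id).injOn

@[simp]
theorem inlRows_apply (G : ((ι ⊕ κ) × μ) →₀ M) (x : ι) (y : μ) :
    G.inlRows (x, y) = G (Sum.inl x, y) :=
  rfl

@[simp]
theorem inrRows_apply (G : ((ι ⊕ κ) × μ) →₀ M) (x : κ) (y : μ) :
    G.inrRows (x, y) = G (Sum.inr x, y) :=
  rfl

theorem sndMarginal_eq_inlRows_add_inrRows (G : ((ι ⊕ κ) × μ) →₀ M) :
    G.sndMarginal = G.inlRows.sndMarginal + G.inrRows.sndMarginal :=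
  ext fun y => finsum_sumElim_split <|
    G.hasFiniteSupport.fun_comp_of_injective (Prod.mk_left_injective y)

end Finsupp

namespace IsBimultijection

variable {ι κ μ : Type*}

theorem eq_sndMarginal {F : (ι × κ) →₀ ℕ} {S : ι →₀ ℕ} {T : κ →₀ ℕ}
    (h : IsBimultijection F S T) : T = F.sndMarginal :=
  Finsupp.ext h.2

theorem inlRows {α : ι →₀ ℕ} {β : κ →₀ ℕ} {γ : μ →₀ ℕ} {G : ((ι ⊕ κ) × μ) →₀ ℕ}
    (hG : IsBimultijection G (Finsupp.sumElim α β) γ) :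
    IsBimultijection G.inlRows α G.inlRows.sndMarginal :=
  ⟨fun x => by simpa using hG.1 (Sum.inl x), fun _ => rfl⟩

theorem inrRows {α : ι →₀ ℕ} {β : κ →₀ ℕ} {γ : μ →₀ ℕ} {G : ((ι ⊕ κ) × μ) →₀ ℕ}
    (hG : IsBimultijection G (Finsupp.sumElim α β) γ) :
    IsBimultijection G.inrRows β G.inrRows.sndMarginal :=
  ⟨fun x => by simpa using hG.1 (Sum.inr x), fun _ => rfl⟩

end IsBimultijection

/-- Every bimultijection `G` from a disjoint union `α ⊔ β` to `γ` factors uniquely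
as `h ∘ (f ⊔ g)` where `f : α → α′` and `g : β → β′` are bimultijections and
`h : α′ ⊔ β′ → γ` is the multi-shuffle associated with a decomposition
`α′ + β′ = γ`. -/
theorem bimultijection_factor_multishuffle {ι κ μ : Type*}
    (α : ι →₀ ℕ) (β : κ →₀ ℕ) (γ : μ →₀ ℕ) (G : ((ι ⊕ κ) × μ) →₀ ℕ)
    (hG : IsBimultijection G (Finsupp.sumElim α β) γ) :
    ∃! q : ((μ →₀ ℕ) × (μ →₀ ℕ)) × (((ι × μ) →₀ ℕ) × ((κ × μ) →₀ ℕ)),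
      q.1.1 + q.1.2 = γ ∧
      IsBimultijection q.2.1 α q.1.1 ∧
      IsBimultijection q.2.2 β q.1.2 ∧
      (∀ (x : ι) (y : μ), G (Sum.inl x, y) = q.2.1 (x, y)) ∧
      (∀ (x : κ) (y : μ), G (Sum.inr x, y) = q.2.2 (x, y)) := by
  have hsum : G.inlRows.sndMarginal + G.inrRows.sndMarginal = γ := by
    rw [hG.eq_sndMarginal, G.sndMarginal_eq_inlRows_add_inrRows]
  refine ⟨((G.inlRows.sndMarginal, G.inrRows.sndMarginal), (G.inlRows, G.inrRows)),
    ⟨hsum, hG.inlRows, hG.inrRows, fun _ _ => rfl, fun _ _ => rfl⟩, ?_⟩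
  rintro ⟨⟨a, b⟩, f, g⟩ ⟨-, hf, hg, hGf, hGg⟩
  obtain rfl : f = G.inlRows := Finsupp.ext fun p => (hGf p.1 p.2).symm
  obtain rfl : g = G.inrRows := Finsupp.ext fun p => (hGg p.1 p.2).symm
  obtain rfl : a = G.inlRows.sndMarginal := hf.eq_sndMarginal
  obtain rfl : b = G.inrRows.sndMarginal := hg.eq_sndMarginal
  rfl
end
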